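/- arXiv:1712.06123 — 9 statements merged into one kernel-verified Lean document; each statement's English description precedes it below -/
import Mathlib

section
/- Let β be a complex number with |β| > 1 and let A ⊂ ℤ[β] be a finite set containing 0 such that every natural number N can be written as a finite sum N = Σ_{i=-m}^{n} a_i β^i with digits a_i ∈ A. Then β is an algebraic number (over ℚ). -/
noncomputable section

/-- `ℤ[β]`: the smallest subring of `ℂ` containing `β` (and hence `ℤ`). -/
def Zring (β : ℂ) : Subring ℂ := Subring.closure {β}

/-- `x` has a finite `(β, A)`-representation `x = ∑_{j=-m}^{n} a_j β^j` with digits in `A`. -/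
def FinRep (β : ℂ) (A : Set ℂ) (x : ℂ) : Prop :=
  ∃ (m n : ℕ) (a : ℤ → ℂ), (∀ j, a j ∈ A) ∧
    x = ∑ j ∈ Finset.Icc (-(m : ℤ)) (n : ℤ), a j * β ^ j

open Polynomial Finset

/-! If `β` were transcendental, `ℤ[β]` would be a copy of `ℤ[X]` and each digit an integer
polynomial in `β`, taken from a finite set. Multiplying a representation of `N` by `β ^ m`
gives a polynomial identity `N X ^ m = ∑ pᵢ X ^ i`, so `N` is a sum of coefficients of
*distinct* degrees of polynomials from that finite set; such sums are bounded independently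
of `N`. -/

theorem Polynomial.exists_sum_natAbs_coeff_le {ι : Type*} (S : Finset ℤ[X]) :
    ∃ M : ℕ, ∀ (s : Finset ι) (p : ι → ℤ[X]) (e : ι → ℕ), (∀ i ∈ s, p i ∈ S) →
      Set.InjOn e s → ∑ i ∈ s, ((p i).coeff (e i)).natAbs ≤ M := by
  set f : ℕ → ℕ := fun k ↦ ∑ q ∈ S, (q.coeff k).natAbs
  refine ⟨∑ k ∈ S.biUnion support, f k, fun s p e hp he ↦ ?_⟩
  calc ∑ i ∈ s, ((p i).coeff (e i)).natAbs
      ≤ ∑ i ∈ s, f (e i) :=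
        sum_le_sum fun i hi ↦ single_le_sum (f := fun q ↦ (q.coeff (e i)).natAbs)
          (fun _ _ ↦ Nat.zero_le _) (hp i hi)
    _ = ∑ k ∈ s.image e, f k := (sum_image he).symm
    _ ≤ ∑ k ∈ S.biUnion support, f k := sum_le_sum_of_ne_zero fun k _ hk ↦ by
        obtain ⟨q, hq, hqk⟩ := exists_ne_zero_of_sum_ne_zero hk
        exact mem_biUnion.mpr ⟨q, hq, mem_support_iff.mpr (by simpa using hqk)⟩

theorem exists_aeval_eq_of_mem_Zring {β x : ℂ} (hx : x ∈ Zring β) :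
    ∃ p : ℤ[X], aeval β p = x := by
  have hx' : x ∈ Algebra.adjoin ℤ {β} := by rwa [Algebra.adjoin_int]
  rwa [Algebra.adjoin_singleton_eq_range_aeval] at hx'

theorem FinRep.exists_mul_pow_eq_sum {β x : ℂ} {A : Set ℂ} (hx : FinRep β A x) (hβ : β ≠ 0) :
    ∃ (m L : ℕ) (d : ℕ → ℂ), (∀ i, d i ∈ A) ∧ x * β ^ m = ∑ i ∈ range L, d i * β ^ i := by
  obtain ⟨m, n, a, ha, rfl⟩ := hx
  refine ⟨m, m + n + 1, fun i ↦ a (i - m), fun i ↦ ha _, ?_⟩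
  rw [sum_mul]
  refine sum_nbij' (fun j ↦ (j + m).toNat) (fun i ↦ i - m) ?_ ?_ ?_ ?_ fun j hj ↦ ?_
  any_goals intro j hj; simp only [mem_Icc, mem_range] at hj ⊢; omega
  have hjm : 0 ≤ j + m := by linarith [(mem_Icc.mp hj).1]
  dsimp only
  rw [Int.toNat_of_nonneg hjm, add_sub_cancel_right, mul_assoc, ← zpow_natCast, ← zpow_natCast,
    ← zpow_add₀ hβ, Int.toNat_of_nonneg hjm]

theorem eq_sum_coeff_of_transcendental {β : ℂ} (hβ : Transcendental ℤ β) {c : ℤ} {m L : ℕ}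
    {p : ℕ → ℤ[X]} (h : c * β ^ m = ∑ i ∈ range L, aeval β (p i) * β ^ i) :
    c = ∑ i ∈ range L with i ≤ m, (p i).coeff (m - i) := by
  have hpoly : C c * X ^ m = ∑ i ∈ range L, p i * X ^ i :=
    transcendental_iff_injective.mp hβ (by simpa using h)
  have := congrArg (coeff · m) hpoly
  simpa [finsetSum_coeff, coeff_mul_X_pow', sum_filter] using this

theorem stmt0_general (β : ℂ) (A : Set ℂ) (hAfin : A.Finite)
    (hA : A ⊆ (Zring β : Set ℂ))
    (hrep : ∀ N : ℕ, FinRep β A (N : ℂ)) :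
    IsAlgebraic ℚ β := by
  by_contra halg
  have htr : Transcendental ℤ β :=
    Transcendental.restrictScalars (algebraMap ℤ ℚ).injective_int halg
  have hβ : β ≠ 0 := fun h ↦ halg (h ▸ isAlgebraic_zero)
  choose! P hP using fun a (ha : a ∈ A) ↦ exists_aeval_eq_of_mem_Zring (hA ha)
  obtain ⟨M, hM⟩ := exists_sum_natAbs_coeff_le (ι := ℕ) (hAfin.toFinset.image P)
  obtain ⟨m, L, d, hd, hsum⟩ := (hrep (M + 1)).exists_mul_pow_eq_sum hβ
  have hcoeff := eq_sum_coeff_of_transcendental htr (c := M + 1) (p := fun i ↦ P (d i))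
    (by simpa [hP _ (hd _)] using hsum)
  have hbound : (M + 1 : ℤ).natAbs ≤ M := by
    rw [hcoeff]
    refine (Int.natAbs_sum_le _ _).trans (hM _ (fun i ↦ P (d i)) (fun i ↦ m - i) ?_ ?_)
    · exact fun i _ ↦ mem_image_of_mem P (hAfin.mem_toFinset.mpr (hd i))
    · intro i hi j hj hij
      simp only [mem_coe, mem_filter] at hi hj hij
      omega
  omega

theorem stmt0 (β : ℂ) (hβ : 1 < ‖β‖) (A : Set ℂ) (hAfin : A.Finite)
    (h0 : (0 : ℂ) ∈ A) (hA : A ⊆ (Zring β : Set ℂ))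
    (hrep : ∀ N : ℕ, FinRep β A (N : ℂ)) :
    IsAlgebraic ℚ β :=
  stmt0_general β A hAfin hA hrep
end
end

section
/- Let β be an algebraic number, β' a conjugate of β with |β'| ≠ 1, and σ : ℚ(β) → ℚ(β') the field isomorphism sending β to β'. If A ⊂ ℤ[β] is a finite alphabet containing 0 and there exists a p-local digit-set conversion φ in base β from A+A to A (parallel addition), then setting A' = σ(A), there exists a p-local digit-set conversion in base β' from A'+A' to A' (parallel addition in (β', A')). -/
noncomputable section

open Pointwise IntermediateField

/-- A `p`-local digit set conversion in base `β` from `B` to `A`, with memory `r` and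
anticipation `t` (so `p = r + t + 1`), given by a local rule `Φ` on windows of length `p`:
it maps digits of `B` to digits of `A`, and on every word over `B` with finite support it
produces a word over `A` with finite support representing the same value. -/
def IsLocalConv (β : ℂ) (B A : Set ℂ) (r t : ℕ)
    (Φ : (Fin (r + t + 1) → ℂ) → ℂ) : Prop :=
  (∀ u : Fin (r + t + 1) → ℂ, (∀ i, u i ∈ B) → Φ u ∈ A) ∧
  ∀ w : ℤ → ℂ, (∀ j, w j ∈ B) → (Function.support w).Finite →
    (Function.support (fun j : ℤ => Φ fun i => w (j + (t : ℤ) - ((i : ℕ) : ℤ)))).Finite ∧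
    ∑ᶠ j : ℤ, w j * β ^ j =
      ∑ᶠ j : ℤ, (Φ fun i => w (j + (t : ℤ) - ((i : ℕ) : ℤ))) * β ^ j

/-- `(β, A)` allows parallel addition: a digit set conversion from `A + A` to `A`
computable in parallel, i.e. `p`-local for some `p = r + t + 1`. -/
def AllowsParAdd (β : ℂ) (A : Set ℂ) : Prop :=
  ∃ (r t : ℕ) (Φ : (Fin (r + t + 1) → ℂ) → ℂ), IsLocalConv β (A + A) A r t Φ

theorem stmt3 (β β' : ℂ) (hβ : IsAlgebraic ℚ β)
    (hconj : Polynomial.aeval β' (minpoly ℚ β) = 0)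
    (hmod : ‖β'‖ ≠ 1)
    (σ : ℚ⟮β⟯ ≃ₐ[ℚ] ℚ⟮β'⟯)
    (hσβ : (σ ⟨β, IntermediateField.mem_adjoin_simple_self ℚ β⟩ : ℂ) = β')
    (A : Set ℂ) (hAfin : A.Finite) (h0 : (0 : ℂ) ∈ A) (hA : A ⊆ (Zring β : Set ℂ))
    (r t : ℕ) (Φ : (Fin (r + t + 1) → ℂ) → ℂ)
    (hpar : IsLocalConv β (A + A) A r t Φ) :
    ∃ A' : Set ℂ,
      (∀ x : ℂ, x ∈ A' ↔ ∃ a : ℂ, ∃ h : a ∈ A ∧ a ∈ ℚ⟮β⟯, (σ ⟨a, h.2⟩ : ℂ) = x) ∧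
      ∃ Φ' : (Fin (r + t + 1) → ℂ) → ℂ, IsLocalConv β' (A' + A') A' r t Φ' := by
  classical
  have hβK : β ∈ ℚ⟮β⟯ := mem_adjoin_simple_self ℚ β
  -- every element of A lies in ℚ⟮β⟯
  have hAK : ∀ a ∈ A, a ∈ ℚ⟮β⟯ := by
    intro a ha
    have hle : Zring β ≤ (ℚ⟮β⟯ : IntermediateField ℚ ℂ).toSubring :=
      Subring.closure_le.mpr (by simpa using hβK)
    exact hle (hA ha)
  have hAAK : ∀ b ∈ A + A, b ∈ ℚ⟮β⟯ := by
    rintro b ⟨x, hx, y, hy, rfl⟩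
    exact add_mem (hAK x hx) (hAK y hy)
  -- the embedding ℚ⟮β⟯ → ℂ through σ
  let f : ℚ⟮β⟯ →ₐ[ℚ] ℂ := (IntermediateField.val ℚ⟮β'⟯).comp σ.toAlgHom
  have hf : ∀ z : ℚ⟮β⟯, f z = (σ z : ℂ) := fun z => rfl
  have hfinj : Function.Injective f := f.toRingHom.injective
  -- the partial maps back and forth
  let τ : ℂ → ℂ := fun x => if h : x ∈ ℚ⟮β⟯ then f ⟨x, h⟩ else 0
  let τ' : ℂ → ℂ := fun x => if h : x ∈ ℚ⟮β'⟯ then (σ.symm ⟨x, h⟩ : ℂ) else 0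
  have hτ : ∀ (x : ℂ) (h : x ∈ ℚ⟮β⟯), τ x = f ⟨x, h⟩ := by
    intro x h; simp only [τ, dif_pos h]
  have L3 : ∀ (x : ℂ) (h : x ∈ ℚ⟮β⟯), τ' (f ⟨x, h⟩) = x := by
    intro x h
    have hm : f ⟨x, h⟩ ∈ ℚ⟮β'⟯ := (σ ⟨x, h⟩).2
    simp only [τ', dif_pos hm]
    have : (⟨f ⟨x, h⟩, hm⟩ : ℚ⟮β'⟯) = σ ⟨x, h⟩ := rfl
    rw [this, AlgEquiv.symm_apply_apply]
  have L1 : ∀ (x : ℂ), x ∈ ℚ⟮β'⟯ → τ (τ' x) = x := by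
    intro x h
    simp only [τ', dif_pos h]
    have hk : ((σ.symm ⟨x, h⟩ : ℚ⟮β⟯) : ℂ) ∈ ℚ⟮β⟯ := (σ.symm ⟨x, h⟩).2
    rw [hτ _ hk]
    have : (⟨((σ.symm ⟨x, h⟩ : ℚ⟮β⟯) : ℂ), hk⟩ : ℚ⟮β⟯) = σ.symm ⟨x, h⟩ := rfl
    rw [this, hf, AlgEquiv.apply_symm_apply]
  have hτ'0 : τ' 0 = 0 := by
    have h0' : (0 : ℂ) ∈ ℚ⟮β'⟯ := zero_mem _
    simp only [τ', dif_pos h0']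
    have : (⟨(0 : ℂ), h0'⟩ : ℚ⟮β'⟯) = 0 := rfl
    rw [this, map_zero]; rfl
  -- the image alphabet
  set A' : Set ℂ := {x : ℂ | ∃ a : ℂ, ∃ h : a ∈ A ∧ a ∈ ℚ⟮β⟯, (σ ⟨a, h.2⟩ : ℂ) = x}
    with hA'def
  have hA'mem : ∀ a (ha : a ∈ A), f ⟨a, hAK a ha⟩ ∈ A' := by
    intro a ha
    exact ⟨a, ⟨ha, hAK a ha⟩, rfl⟩
  -- every element of A' + A' is f of an element of A + A
  have hAA'elem : ∀ x ∈ A' + A', ∃ b : ℂ, ∃ hb : b ∈ A + A, x = f ⟨b, hAAK b hb⟩ := by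
    rintro x ⟨x₁, hx₁, x₂, hx₂, rfl⟩
    obtain ⟨a₁, ⟨ha₁, hk₁⟩, rfl⟩ := hx₁
    obtain ⟨a₂, ⟨ha₂, hk₂⟩, rfl⟩ := hx₂
    refine ⟨a₁ + a₂, Set.add_mem_add ha₁ ha₂, ?_⟩
    show (σ ⟨a₁, hk₁⟩ : ℂ) + (σ ⟨a₂, hk₂⟩ : ℂ) = ((σ (⟨a₁, hk₁⟩ + ⟨a₂, hk₂⟩) : ℚ⟮β'⟯) : ℂ)
    rw [map_add]
    rfl
  -- τ' maps A' + A' into A + A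
  have hτ'AA : ∀ x ∈ A' + A', τ' x ∈ A + A := by
    intro x hx
    obtain ⟨b, hb, rfl⟩ := hAA'elem x hx
    rw [L3 b (hAAK b hb)]; exact hb
  -- the transported local rule
  refine ⟨A', fun x => Iff.rfl, fun u => τ (Φ fun i => τ' (u i)), ?_, ?_⟩
  · -- alphabet condition
    intro u hu
    have hΦ : Φ (fun i => τ' (u i)) ∈ A := hpar.1 _ fun i => hτ'AA _ (hu i)
    show τ (Φ fun i => τ' (u i)) ∈ A'
    rw [hτ _ (hAK _ hΦ)]
    exact hA'mem _ hΦ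
  · -- main condition
    intro w hw hwfin
    set w₀ : ℤ → ℂ := fun j => τ' (w j) with hw₀def
    have hw₀ : ∀ j, w₀ j ∈ A + A := fun j => hτ'AA _ (hw j)
    have hw₀fin : (Function.support w₀).Finite := by
      refine hwfin.subset fun j hj => ?_
      intro hwj
      apply hj
      simp only [hw₀def, hwj, hτ'0]
    obtain ⟨hvfin, hvsum⟩ := hpar.2 w₀ hw₀ hw₀fin
    set v : ℤ → ℂ := fun j => Φ fun i => w₀ (j + (t : ℤ) - ((i : ℕ) : ℤ)) with hvdef
    have hvA : ∀ j, v j ∈ A := fun j => hpar.1 _ fun i => hw₀ _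
    have hvK : ∀ j, v j ∈ ℚ⟮β⟯ := fun j => hAK _ (hvA j)
    have hΦ'eq : ∀ j : ℤ,
        (τ (Φ fun i => τ' (w (j + (t : ℤ) - ((i : ℕ) : ℤ))))) = τ (v j) := fun j => rfl
    constructor
    · refine hvfin.subset fun j hj => ?_
      intro hvj
      apply hj
      simp only [hΦ'eq j, hvj]
      rw [hτ _ (zero_mem _)]
      have : (⟨(0 : ℂ), zero_mem _⟩ : ℚ⟮β⟯) = 0 := rfl
      rw [this, map_zero]
    · -- the value identity, transported through f
      have hwK' : ∀ j, w j ∈ ℚ⟮β'⟯ := by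
        intro j
        obtain ⟨b, hb, hbe⟩ := hAA'elem _ (hw j)
        rw [hbe, hf]; exact (σ _).2
      have hw₀K : ∀ j, w₀ j ∈ ℚ⟮β⟯ := fun j => hAAK _ (hw₀ j)
      set βK : ℚ⟮β⟯ := ⟨β, hβK⟩ with hβKdef
      have hfβ : f βK = β' := by rw [hf]; exact hσβ
      set W : ℤ → ℚ⟮β⟯ := fun j => (⟨w₀ j, hw₀K j⟩ : ℚ⟮β⟯) * βK ^ j with hWdef
      set V : ℤ → ℚ⟮β⟯ := fun j => (⟨v j, hvK j⟩ : ℚ⟮β⟯) * βK ^ j with hVdef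
      have hfW : ∀ j, f (W j) = w j * β' ^ j := by
        intro j
        rw [hWdef]
        simp only [map_mul, map_zpow₀, hfβ]
        congr 1
        rw [← hτ _ (hw₀K j)]
        exact L1 _ (hwK' j)
      have hfV : ∀ j, f (V j) = τ (v j) * β' ^ j := by
        intro j
        rw [hVdef]
        simp only [map_mul, map_zpow₀, hfβ]
        rw [hτ _ (hvK j)]
      have hcoeW : ∀ j, ((W j : ℚ⟮β⟯) : ℂ) = w₀ j * β ^ j := fun j => rfl
      have hcoeV : ∀ j, ((V j : ℚ⟮β⟯) : ℂ) = v j * β ^ j := fun j => rfl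
      have hcinj : Function.Injective ((IntermediateField.val ℚ⟮β⟯) : ℚ⟮β⟯ →ₐ[ℚ] ℂ) :=
        Subtype.coe_injective
      have hWV : (∑ᶠ j : ℤ, W j) = ∑ᶠ j : ℤ, V j := by
        apply hcinj
        calc ((∑ᶠ j : ℤ, W j : ℚ⟮β⟯) : ℂ)
            = ∑ᶠ j : ℤ, ((W j : ℚ⟮β⟯) : ℂ) :=
              AddMonoidHom.map_finsum_of_injective
                ((IntermediateField.val ℚ⟮β⟯).toAddMonoidHom) hcinj W
          _ = ∑ᶠ j : ℤ, w₀ j * β ^ j := finsum_congr fun j => hcoeW j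
          _ = ∑ᶠ j : ℤ, v j * β ^ j := hvsum
          _ = ∑ᶠ j : ℤ, ((V j : ℚ⟮β⟯) : ℂ) := (finsum_congr fun j => hcoeV j).symm
          _ = ((∑ᶠ j : ℤ, V j : ℚ⟮β⟯) : ℂ) :=
              (AddMonoidHom.map_finsum_of_injective
                ((IntermediateField.val ℚ⟮β⟯).toAddMonoidHom) hcinj V).symm
      calc ∑ᶠ j : ℤ, w j * β' ^ j = ∑ᶠ j : ℤ, f (W j) := by
            exact finsum_congr fun j => (hfW j).symm
        _ = f (∑ᶠ j : ℤ, W j) :=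
            (AddMonoidHom.map_finsum_of_injective f.toAddMonoidHom hfinj W).symm
        _ = f (∑ᶠ j : ℤ, V j) := by rw [hWV]
        _ = ∑ᶠ j : ℤ, f (V j) :=
            AddMonoidHom.map_finsum_of_injective f.toAddMonoidHom hfinj V
        _ = ∑ᶠ j : ℤ, (τ (v j)) * β' ^ j := finsum_congr fun j => hfV j
end
end

section
/- Let β ∈ ℝ with β > 1, A ⊂ ℤ[β] a finite alphabet containing 0, with minimum λ = min A and maximum Λ = max A. Suppose a p-local parallel addition on (β,A) exists, defined by Φ : (A+A)^p → A with p = r+t+1. Then for every b ∈ A+A with b > λ and (b ≥ 0 or t = 0), one has Φ(b,…,b) ≠ λ. -/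
noncomputable section

open Pointwise

/-- `ℤ[β]` inside `ℝ`: the smallest subring of `ℝ` containing `β`. -/
def ZringR (β : ℝ) : Subring ℝ := Subring.closure {β}

/-- A `p`-local digit set conversion in base `β` from `B` to `A` (over `ℝ`), with memory `r`
and anticipation `t` (so `p = r + t + 1`), given by a local rule `Φ`. -/
def IsLocalConvR (β : ℝ) (B A : Set ℝ) (r t : ℕ)
    (Φ : (Fin (r + t + 1) → ℝ) → ℝ) : Prop :=
  (∀ u : Fin (r + t + 1) → ℝ, (∀ i, u i ∈ B) → Φ u ∈ A) ∧
  ∀ w : ℤ → ℝ, (∀ j, w j ∈ B) → (Function.support w).Finite →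
    (Function.support (fun j : ℤ => Φ fun i => w (j + (t : ℤ) - ((i : ℕ) : ℤ)))).Finite ∧
    ∑ᶠ j : ℤ, w j * β ^ j =
      ∑ᶠ j : ℤ, (Φ fun i => w (j + (t : ℤ) - ((i : ℕ) : ℤ))) * β ^ j

/-!
Feed the rule the block of `n` digits `b` at positions `0, …, n - 1`. Away from the two edges
every window is constant, so the output digit there is `Φ (b, …, b) = λ`; near each edge the
output is a profile that does not depend on `n`. Comparing the values of input and output for
two consecutive `n`, the terms growing like `β ^ n` cancel and leave `(β - 1) D = λ β ^ r - b`,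
where `D = ∑_{-t ≤ j < r} d_j β ^ j` is the value of the left edge profile. Every digit `d_j`
is at least `λ`, so `(β - 1) D ≥ λ (β ^ r - β ^ (-t))`, whence `b ≤ λ β ^ (-t)`. This contradicts
`b > λ` when `t = 0`, and also when `b ≥ 0`, because then `λ ≤ 0`.
-/

open Finset

theorem indicator_const_mem {B : Set ℝ} (h0 : 0 ∈ B) {b : ℝ} (hb : b ∈ B) (s : Set ℤ) (j : ℤ) :
    s.indicator (fun _ => b) j ∈ B := by
  by_cases hj : j ∈ s <;> simp [hj, hb, h0]

theorem mul_sum_Ico_zpow {β : ℝ} (hβ : β ≠ 0) {a c : ℤ} (hac : a ≤ c) :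
    (β - 1) * ∑ j ∈ Ico a c, β ^ j = β ^ c - β ^ a := by
  induction c, hac using Int.leInduction with
  | base => simp
  | succ c hac ih =>
    rw [← insert_Ico_right_eq_Ico_add_one hac, sum_insert (by simp), mul_add, ih,
      zpow_add_one₀ hβ]
    ring

def window (r t : ℕ) (w : ℤ → ℝ) (j : ℤ) : Fin (r + t + 1) → ℝ := fun i => w (j + t - i)

section Window

variable {r t : ℕ} {b : ℝ} {n j : ℤ}

theorem window_indicator_Ico_of_lt (hn : r + t ≤ n) (hj : j < r) :
    window r t ((Set.Ico 0 n).indicator fun _ => b) j =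
      window r t ((Set.Ici 0).indicator fun _ => b) j := by
  funext i
  have := i.isLt
  simp only [window, Set.indicator_apply, Set.mem_Ico, Set.mem_Ici]
  split_ifs <;> first | rfl | omega

theorem window_indicator_Ico_of_mem (hj : j ∈ Ico (r : ℤ) (n - t)) :
    window r t ((Set.Ico 0 n).indicator fun _ => b) j = fun _ => b := by
  rw [Finset.mem_Ico] at hj
  funext i
  have := i.isLt
  simp only [window, Set.indicator_apply, Set.mem_Ico]
  split_ifs <;> first | rfl | omega

theorem window_indicator_Ico_add (hn : r + t ≤ n) (hj : -(t : ℤ) ≤ j) :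
    window r t ((Set.Ico 0 n).indicator fun _ => b) (j + n) =
      window r t ((Set.Iio 0).indicator fun _ => b) j := by
  funext i
  have := i.isLt
  simp only [window, Set.indicator_apply, Set.mem_Ico, Set.mem_Iio]
  split_ifs <;> first | rfl | omega

theorem window_indicator_Ico_of_notMem (hj : j ∉ Ico (-(t : ℤ)) (n + r)) :
    window r t ((Set.Ico 0 n).indicator fun _ => b) j = 0 := by
  rw [Finset.mem_Ico] at hj
  funext i
  have := i.isLt
  simp only [window, Set.indicator_apply, Set.mem_Ico, Pi.zero_apply]
  split_ifs <;> first | rfl | omega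

end Window

namespace IsLocalConvR

variable {β : ℝ} {B A : Set ℝ} {r t : ℕ} {Φ : (Fin (r + t + 1) → ℝ) → ℝ}

theorem map_mem (h : IsLocalConvR β B A r t Φ) {u : Fin (r + t + 1) → ℝ} (hu : ∀ i, u i ∈ B) :
    Φ u ∈ A :=
  h.1 u hu

theorem finsum_window_eq (h : IsLocalConvR β B A r t Φ) {w : ℤ → ℝ} (hw : ∀ j, w j ∈ B)
    (hfin : w.support.Finite) :
    ∑ᶠ j, w j * β ^ j = ∑ᶠ j, Φ (window r t w j) * β ^ j :=
  (h.2 w hw hfin).2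

theorem map_zero (h : IsLocalConvR β B A r t Φ) (h0 : 0 ∈ B) : Φ 0 = 0 := by
  by_contra hne
  have hfin := (h.2 0 (fun _ => h0) (by simp)).1
  exact Set.infinite_univ (hfin.subset fun _ _ => hne)

theorem block_expansion (h : IsLocalConvR β B A r t Φ) (h0 : 0 ∈ B) {b : ℝ} (hb : b ∈ B)
    (hβ : β ≠ 0) {n : ℤ} (hn : r + t ≤ n) :
    b * ∑ j ∈ Ico 0 n, β ^ j =
      ∑ j ∈ Ico (-(t : ℤ)) r, Φ (window r t ((Set.Ici 0).indicator fun _ => b) j) * β ^ j +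
        Φ (fun _ => b) * ∑ j ∈ Ico (r : ℤ) (n - t), β ^ j +
        β ^ n * ∑ j ∈ Ico (-(t : ℤ)) r,
          Φ (window r t ((Set.Iio 0).indicator fun _ => b) j) * β ^ j := by
  set w := (Set.Ico 0 n).indicator fun _ => b with hw_def
  have hw : ∀ j, w j ∈ B := indicator_const_mem h0 hb _
  have hsupp : w.support ⊆ ↑(Ico 0 n) := by simp [w]
  have hout : (fun j => Φ (window r t w j) * β ^ j).support ⊆ ↑(Ico (-(t : ℤ)) (n + r)) := by
    intro j hj
    by_contra hj'
    rw [mem_coe] at hj'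
    exact hj (by simp only [hw_def, window_indicator_Ico_of_notMem hj', h.map_zero h0, zero_mul])
  have hlhs : ∑ᶠ j, w j * β ^ j = b * ∑ j ∈ Ico 0 n, β ^ j := by
    rw [finsum_eq_sum_of_support_subset _
      fun j hj => hsupp (Function.support_mul_subset_left _ _ hj), mul_sum]
    refine sum_congr rfl fun j hj => ?_
    rw [hw_def, Set.indicator_of_mem (by simpa using hj)]
  rw [← hlhs, h.finsum_window_eq hw ((Ico 0 n).finite_toSet.subset hsupp),
    finsum_eq_sum_of_support_subset _ hout,
    ← Ico_union_Ico_eq_Ico (a := -(t : ℤ)) (b := r) (c := n + r) (by omega) (by omega),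
    sum_union (Ico_disjoint_Ico_consecutive _ _ _),
    ← Ico_union_Ico_eq_Ico (a := (r : ℤ)) (b := n - t) (c := n + r) (by omega) (by omega),
    sum_union (Ico_disjoint_Ico_consecutive _ _ _), ← add_assoc]
  congr 1
  congr 1
  · exact sum_congr rfl fun j hj => by
      rw [hw_def, window_indicator_Ico_of_lt hn (mem_Ico.1 hj).2]
  · rw [mul_sum]
    exact sum_congr rfl fun j hj => by rw [hw_def, window_indicator_Ico_of_mem hj]
  · rw [mul_sum, show n - t = -t + n by ring, show n + r = r + n by ring, ← sum_Ico_add']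
    refine sum_congr rfl fun j hj => ?_
    rw [hw_def, window_indicator_Ico_add hn (mem_Ico.1 hj).1, zpow_add₀ hβ]
    ring

theorem sub_one_mul_sum_left_edge (h : IsLocalConvR β B A r t Φ) (h0 : 0 ∈ B) {b : ℝ}
    (hb : b ∈ B) (hβ : 1 < β) :
    (β - 1) * ∑ j ∈ Ico (-(t : ℤ)) r, Φ (window r t ((Set.Ici 0).indicator fun _ => b) j) * β ^ j =
      Φ (fun _ => b) * β ^ (r : ℤ) - b := by
  have hβ0 : β ≠ 0 := (zero_lt_one.trans hβ).ne'
  set D := ∑ j ∈ Ico (-(t : ℤ)) r, Φ (window r t ((Set.Ici 0).indicator fun _ => b) j) * β ^ j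
  set C := ∑ j ∈ Ico (-(t : ℤ)) r, Φ (window r t ((Set.Iio 0).indicator fun _ => b) j) * β ^ j
  set c := Φ fun _ => b
  have hXY : ∀ n : ℤ, r + t ≤ n →
      (c * β ^ (r : ℤ) - b - (β - 1) * D) + β ^ n * (b - c * β ^ (-(t : ℤ)) - (β - 1) * C) = 0 := by
    intro n hn
    have hexp := h.block_expansion h0 hb hβ0 hn
    have hG₁ := mul_sum_Ico_zpow hβ0 (show 0 ≤ n by omega)
    have hG₂ := mul_sum_Ico_zpow hβ0 (show (r : ℤ) ≤ n - t by omega)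
    have hpow : β ^ (n - t) = β ^ n * β ^ (-(t : ℤ)) := by rw [← zpow_add₀ hβ0, sub_eq_add_neg]
    rw [zpow_zero] at hG₁
    linear_combination (β - 1) * hexp - b * hG₁ + c * hG₂ + c * hpow
  have hX : (β - 1) * (c * β ^ (r : ℤ) - b - (β - 1) * D) = 0 := by
    have h₁ := hXY (r + t) le_rfl
    have h₂ := hXY (r + t + 1) (by omega)
    rw [zpow_add_one₀ hβ0] at h₂
    linear_combination β * h₁ - h₂
  linarith [(mul_eq_zero.1 hX).resolve_left (by linarith)]

theorem le_map_const_mul_zpow_of_forall_le (h : IsLocalConvR β B A r t Φ) (h0 : 0 ∈ B) {b : ℝ}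
    (hb : b ∈ B) (hβ : 1 < β) (hmin : ∀ a ∈ A, Φ (fun _ => b) ≤ a) :
    b ≤ Φ (fun _ => b) * β ^ (-(t : ℤ)) := by
  have hβ0 : β ≠ 0 := (zero_lt_one.trans hβ).ne'
  set c := Φ fun _ => b
  set G := ∑ j ∈ Ico (-(t : ℤ)) r, β ^ j
  set D := ∑ j ∈ Ico (-(t : ℤ)) r, Φ (window r t ((Set.Ici 0).indicator fun _ => b) j) * β ^ j
  have hD : c * G ≤ D := by
    rw [mul_sum]
    exact sum_le_sum fun j _ => mul_le_mul_of_nonneg_right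
      (hmin _ (h.map_mem fun _ => indicator_const_mem h0 hb _ _)) (by positivity)
  have hG : (β - 1) * G = β ^ (r : ℤ) - β ^ (-(t : ℤ)) :=
    mul_sum_Ico_zpow hβ0 (show -(t : ℤ) ≤ r by omega)
  calc b = c * β ^ (r : ℤ) - (β - 1) * D := by rw [h.sub_one_mul_sum_left_edge h0 hb hβ]; ring
    _ ≤ c * β ^ (r : ℤ) - (β - 1) * (c * G) := by gcongr
    _ = c * β ^ (-(t : ℤ)) := by rw [mul_left_comm, hG]; ring

end IsLocalConvR

theorem stmt4_general (β : ℝ) (hβ : 1 < β) (A : Finset ℝ)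
    (h0 : (0 : ℝ) ∈ A)
    (r t : ℕ) (Φ : (Fin (r + t + 1) → ℝ) → ℝ)
    (hpar : IsLocalConvR β ((A : Set ℝ) + (A : Set ℝ)) (A : Set ℝ) r t Φ)
    (b : ℝ) (hb : b ∈ (A : Set ℝ) + (A : Set ℝ))
    (hblam : b > A.min' ⟨0, h0⟩) (hcase : 0 ≤ b ∨ t = 0) :
    Φ (fun _ => b) ≠ A.min' ⟨0, h0⟩ := by
  intro hΦ
  have h00 : (0 : ℝ) ∈ (A : Set ℝ) + (A : Set ℝ) := by simpa using Set.add_mem_add h0 h0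
  have hbound := hpar.le_map_const_mul_zpow_of_forall_le h00 hb hβ
    fun a ha => hΦ ▸ A.min'_le a ha
  rw [hΦ] at hbound
  have hmin_nonpos : A.min' ⟨0, h0⟩ ≤ 0 := A.min'_le 0 h0
  rcases hcase with hb0 | rfl
  · have hpow : 0 < β ^ (-(t : ℤ)) := by positivity
    have hlt : A.min' ⟨0, h0⟩ * β ^ (-(t : ℤ)) < b := by
      rcases hmin_nonpos.lt_or_eq with hneg | hzero
      · exact (mul_neg_of_neg_of_pos hneg hpow).trans_le hb0
      · rwa [hzero, zero_mul, ← hzero]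
    linarith
  · rw [Nat.cast_zero, neg_zero, zpow_zero, mul_one] at hbound
    linarith

theorem stmt4 (β : ℝ) (hβ : 1 < β) (A : Finset ℝ)
    (h0 : (0 : ℝ) ∈ A) (hA : (A : Set ℝ) ⊆ (ZringR β : Set ℝ))
    (r t : ℕ) (Φ : (Fin (r + t + 1) → ℝ) → ℝ)
    (hpar : IsLocalConvR β ((A : Set ℝ) + (A : Set ℝ)) (A : Set ℝ) r t Φ)
    (b : ℝ) (hb : b ∈ (A : Set ℝ) + (A : Set ℝ))
    (hblam : b > A.min' ⟨0, h0⟩) (hcase : 0 ≤ b ∨ t = 0) :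
    Φ (fun _ => b) ≠ A.min' ⟨0, h0⟩ :=
  stmt4_general β hβ A h0 r t Φ hpar b hb hblam hcase
end
end

section
/- Let β ∈ ℝ with β > 1 and A ⊂ ℤ[β] a finite alphabet with 0 ∈ A and Λ = max A ≠ 0. If Φ : (A+A)^p → A is the local rule of a p-local parallel addition in (β,A), then Φ(Λ,…,Λ) ≠ Λ. -/
noncomputable section

open Pointwise

/-!
Suppose `Φ (Λ, …, Λ) = Λ`. Let `w` be the string of `Λ`s on `[0, 2(r + t)]` and let `w'` be `w`
with the middle digit raised from `Λ` to `2Λ`; both are strings over `A + A`. The conversion of `w`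
outputs `Λ = max A` at every position whose window sees the middle digit, and these are the only
positions where the two outputs can differ, so the output of `w'` is digitwise at most that of `w`.
Since `β > 0`, the value of `w'` is then at most that of `w`, although it exceeds it by
`Λ β^(r+t) > 0`.
-/

open Function

theorem finsum_mul_sub_finsum_mul {ι R : Type*} [Ring R] {f g : ι → R} (h : ι → R)
    (hf : (support f).Finite) (hg : (support g).Finite) {s : Finset ι}
    (hfg : ∀ i ∉ s, f i = g i) :
    ∑ᶠ i, f i * h i - ∑ᶠ i, g i * h i = ∑ i ∈ s, (f i - g i) * h i := by
  rw [← finsum_sub_distrib (hf.subset (support_mul_subset_left _ _))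
    (hg.subset (support_mul_subset_left _ _))]
  simp_rw [← sub_mul]
  refine finsum_eq_finsetSum_of_support_subset (fun i => (f i - g i) * h i) fun i hi => ?_
  by_contra hs
  exact hi (by simp [hfg i hs])

/-- The input digits `w (j + t), …, w (j - r)` from which the local rule computes output digit `j`. -/
def localWindow (r t : ℕ) (w : ℤ → ℝ) (j : ℤ) : Fin (r + t + 1) → ℝ :=
  fun i => w (j + t - i)

theorem localWindow_update_of_notMem {r t : ℕ} (w : ℤ → ℝ) {j k : ℤ} (x : ℝ)
    (hj : j ∉ Finset.Icc (k - t) (k + r)) :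
    localWindow r t (update w k x) j = localWindow r t w j := by
  rw [Finset.mem_Icc] at hj
  funext i
  exact update_of_ne (by omega) _ _

theorem localWindow_indicator_const {r t : ℕ} {s : Set ℤ} (c : ℝ) {j : ℤ}
    (hs : Set.Icc (j - r) (j + t) ⊆ s) :
    localWindow r t (s.indicator fun _ => c) j = fun _ => c := by
  funext i
  exact Set.indicator_of_mem (hs ⟨by omega, by omega⟩) _

namespace IsLocalConvR

variable {β : ℝ} {B A : Set ℝ} {r t : ℕ} {Φ : (Fin (r + t + 1) → ℝ) → ℝ}

theorem finite_support_output (hconv : IsLocalConvR β B A r t Φ) {w : ℤ → ℝ}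
    (hwB : ∀ j, w j ∈ B) (hw : (support w).Finite) :
    (support fun j => Φ (localWindow r t w j)).Finite :=
  (hconv.2 w hwB hw).1

theorem finsum_output (hconv : IsLocalConvR β B A r t Φ) {w : ℤ → ℝ}
    (hwB : ∀ j, w j ∈ B) (hw : (support w).Finite) :
    ∑ᶠ j, Φ (localWindow r t w j) * β ^ j = ∑ᶠ j, w j * β ^ j :=
  (hconv.2 w hwB hw).2.symm

/-- Raising input digit `k` by `c` changes only the output digits in `[k - t, k + r]`, and there
none of them can exceed `Λ`. -/
theorem mul_zpow_nonpos (hconv : IsLocalConvR β B A r t Φ) (hβ : 0 ≤ β) {Λ : ℝ}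
    (hAΛ : ∀ a ∈ A, a ≤ Λ) {w : ℤ → ℝ} (hwB : ∀ j, w j ∈ B) (hw : (support w).Finite)
    {k : ℤ} {c : ℝ} (hc : w k + c ∈ B)
    (hΦ : ∀ j ∈ Finset.Icc (k - t) (k + r), Φ (localWindow r t w j) = Λ) :
    c * β ^ k ≤ 0 := by
  set w' := update w k (w k + c)
  have hw'B : ∀ j, w' j ∈ B := fun j => by
    rcases eq_or_ne j k with rfl | h
    · simpa [w'] using hc
    · simpa [w', update_of_ne h] using hwB j
  have hw' : (support w').Finite := (hw.insert k).subset fun j hj => by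
    rcases eq_or_ne j k with rfl | h
    · exact Set.mem_insert _ _
    · exact Set.mem_insert_of_mem _ (by simpa [w', update_of_ne h] using hj)
  calc c * β ^ k
      = ∑ j ∈ {k}, (w' j - w j) * β ^ j := by simp [w']
    _ = ∑ᶠ j, w' j * β ^ j - ∑ᶠ j, w j * β ^ j :=
        (finsum_mul_sub_finsum_mul _ hw' hw fun j hj =>
          update_of_ne (Finset.notMem_singleton.1 hj) _ _).symm
    _ = ∑ᶠ j, Φ (localWindow r t w' j) * β ^ j - ∑ᶠ j, Φ (localWindow r t w j) * β ^ j := by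
        rw [hconv.finsum_output hw'B hw', hconv.finsum_output hwB hw]
    _ = ∑ j ∈ Finset.Icc (k - t) (k + r),
          (Φ (localWindow r t w' j) - Φ (localWindow r t w j)) * β ^ j :=
        finsum_mul_sub_finsum_mul _ (hconv.finite_support_output hw'B hw')
          (hconv.finite_support_output hwB hw) fun j hj => by
            rw [localWindow_update_of_notMem w _ hj]
    _ ≤ 0 := Finset.sum_nonpos fun j hj => by
        rw [hΦ j hj]
        exact mul_nonpos_of_nonpos_of_nonneg
          (sub_nonpos.2 (hAΛ _ (hconv.1 _ fun _ => hw'B _))) (zpow_nonneg hβ j)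

end IsLocalConvR

theorem stmt5_general (β : ℝ) (hβ : 1 < β) (A : Finset ℝ)
    (h0 : (0 : ℝ) ∈ A)
    (hΛ : A.max' ⟨0, h0⟩ ≠ 0)
    (r t : ℕ) (Φ : (Fin (r + t + 1) → ℝ) → ℝ)
    (hpar : IsLocalConvR β ((A : Set ℝ) + (A : Set ℝ)) (A : Set ℝ) r t Φ) :
    Φ (fun _ => A.max' ⟨0, h0⟩) ≠ A.max' ⟨0, h0⟩ := by
  intro hΦΛ
  have hβ0 : 0 < β := by linarith
  set Λ := A.max' ⟨0, h0⟩
  have hΛA : Λ ∈ A := A.max'_mem _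
  have hΛpos : 0 < Λ := (A.le_max' 0 h0).lt_of_ne' hΛ
  have hAB : ∀ a ∈ A, a ∈ (A : Set ℝ) + (A : Set ℝ) := fun a ha => ⟨a, ha, 0, h0, add_zero a⟩
  set m : ℤ := r + t with hm
  set w := (Set.Icc 0 (2 * m)).indicator fun _ => Λ
  have hwB : ∀ j, w j ∈ (A : Set ℝ) + (A : Set ℝ) := fun j => by
    simp only [w, Set.indicator_apply]
    split_ifs
    exacts [hAB _ hΛA, hAB _ h0]
  have hwm : w m = Λ := Set.indicator_of_mem (show m ∈ Set.Icc 0 (2 * m) by grind) _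
  have hwin : ∀ j ∈ Finset.Icc (m - t) (m + r), Φ (localWindow r t w j) = Λ := fun j hj => by
    rw [Finset.mem_Icc] at hj
    rw [localWindow_indicator_const _ (Set.Icc_subset_Icc (by omega) (by omega))]
    exact hΦΛ
  have := hpar.mul_zpow_nonpos hβ0.le (fun a ha => A.le_max' a ha) hwB
    ((Set.finite_Icc _ _).subset Set.support_indicator_subset)
    (by rw [hwm]; exact Set.add_mem_add hΛA hΛA) hwin
  exact this.not_gt (mul_pos hΛpos (zpow_pos hβ0 m))

theorem stmt5 (β : ℝ) (hβ : 1 < β) (A : Finset ℝ)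
    (h0 : (0 : ℝ) ∈ A) (hA : (A : Set ℝ) ⊆ (ZringR β : Set ℝ))
    (hΛ : A.max' ⟨0, h0⟩ ≠ 0)
    (r t : ℕ) (Φ : (Fin (r + t + 1) → ℝ) → ℝ)
    (hpar : IsLocalConvR β ((A : Set ℝ) + (A : Set ℝ)) (A : Set ℝ) r t Φ) :
    Φ (fun _ => A.max' ⟨0, h0⟩) ≠ A.max' ⟨0, h0⟩ :=
  stmt5_general β hβ A h0 hΛ r t Φ hpar
end
end

section
/- Let (β,A) be a numeration system with 0 ∈ A ⊂ ℤ[β] and 1 ∈ A[β]. Then A[β] is an additive abelian group if and only if A[β] = ℤ[β]. -/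
noncomputable section

/-- `A[β]`: values of finite digit strings over `A` in nonnegative powers of `β`. -/
def Apoly (β : ℂ) (A : Set ℂ) : Set ℂ :=
  {x | ∃ (n : ℕ) (a : ℕ → ℂ), (∀ j, a j ∈ A) ∧
    x = ∑ j ∈ Finset.range (n + 1), a j * β ^ j}

/-- `ℕ[β]`: finite sums `∑ n_i β^i` with natural number coefficients. -/
def Npoly (β : ℂ) : Set ℂ :=
  {x | ∃ (n : ℕ) (c : ℕ → ℕ), x = ∑ j ∈ Finset.range (n + 1), (c j : ℂ) * β ^ j}

/-! `ℤ[β]` is the `ℤ`-span of the powers of `β`, and `A[β]` contains every power of `β`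
because it contains `1` and is stable under multiplication by `β`; so once `A[β]` is an
additive group it contains `ℤ[β]`. The reverse inclusion holds since `A ⊆ ℤ[β]`. -/

lemma Subring.closure_singleton_subset_of_pow_mem {R : Type*} [CommRing R] {β : R}
    (G : AddSubgroup R) (hG : ∀ j : ℕ, β ^ j ∈ G) : (Subring.closure {β} : Set R) ⊆ G := by
  intro x hx
  have hx' : x ∈ Subalgebra.toSubmodule (Algebra.adjoin ℤ {β}) := by
    rwa [Algebra.adjoin_int]
  rw [Algebra.adjoin_eq_span] at hx'
  refine (Submodule.span_le (p := G.toIntSubmodule)).mpr ?_ hx'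
  rintro _ hy
  obtain ⟨j, rfl⟩ := Submonoid.mem_closure_singleton.mp hy
  exact hG j

section Apoly

variable {β : ℂ} {A : Set ℂ}

lemma zero_mem_Apoly (h0 : (0 : ℂ) ∈ A) : (0 : ℂ) ∈ Apoly β A :=
  ⟨0, fun _ => 0, fun _ => h0, by simp⟩

lemma beta_mul_mem_Apoly (h0 : (0 : ℂ) ∈ A) {x : ℂ} (hx : x ∈ Apoly β A) :
    β * x ∈ Apoly β A := by
  obtain ⟨n, a, ha, rfl⟩ := hx
  refine ⟨n + 1, fun j => if j = 0 then 0 else a (j - 1),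
    fun j => by dsimp only; split_ifs <;> simp [h0, ha], ?_⟩
  simp only [Finset.sum_range_succ' _ (n + 1), Finset.mul_sum, pow_succ]
  simp [mul_comm, mul_left_comm]

lemma pow_mem_Apoly (h0 : (0 : ℂ) ∈ A) (h1 : (1 : ℂ) ∈ Apoly β A) (j : ℕ) :
    β ^ j ∈ Apoly β A := by
  induction j with
  | zero => simpa using h1
  | succ j ih => simpa [pow_succ'] using beta_mul_mem_Apoly h0 ih

lemma Apoly_subset_Zring (hA : A ⊆ (Zring β : Set ℂ)) : Apoly β A ⊆ (Zring β : Set ℂ) := by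
  have hβ : β ∈ Zring β := Subring.subset_closure (Set.mem_singleton β)
  rintro _ ⟨n, a, ha, rfl⟩
  exact sum_mem fun j _ => mul_mem (hA (ha j)) (pow_mem hβ j)

end Apoly

theorem stmt8_general (β : ℂ) (A : Set ℂ)
    (h0 : (0 : ℂ) ∈ A) (hA : A ⊆ (Zring β : Set ℂ))
    (h1 : (1 : ℂ) ∈ Apoly β A) :
    ((∀ x ∈ Apoly β A, ∀ y ∈ Apoly β A, x + y ∈ Apoly β A) ∧
      (∀ x ∈ Apoly β A, -x ∈ Apoly β A)) ↔
    Apoly β A = (Zring β : Set ℂ) := by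
  constructor
  · rintro ⟨hadd, hneg⟩
    let G : AddSubgroup ℂ :=
      { carrier := Apoly β A
        add_mem' := fun hx hy => hadd _ hx _ hy
        zero_mem' := zero_mem_Apoly h0
        neg_mem' := fun hx => hneg _ hx }
    exact (Apoly_subset_Zring hA).antisymm
      (Subring.closure_singleton_subset_of_pow_mem G (pow_mem_Apoly h0 h1))
  · intro h
    rw [h]
    exact ⟨fun _ hx _ hy => add_mem hx hy, fun _ hx => neg_mem hx⟩

theorem stmt8 (β : ℂ) (hβ : 1 < ‖β‖) (A : Set ℂ) (hAfin : A.Finite)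
    (h0 : (0 : ℂ) ∈ A) (hA : A ⊆ (Zring β : Set ℂ))
    (h1 : (1 : ℂ) ∈ Apoly β A) :
    ((∀ x ∈ Apoly β A, ∀ y ∈ Apoly β A, x + y ∈ Apoly β A) ∧
      (∀ x ∈ Apoly β A, -x ∈ Apoly β A)) ↔
    Apoly β A = (Zring β : Set ℂ) :=
  stmt8_general β A h0 hA h1
end
end

section
/- Let β ∈ ℂ with |β| > 1 be an algebraic number and A ⊂ ℤ[β] a finite alphabet with 0 ∈ A. If ℕ ⊆ A[β], then every algebraic conjugate β' of β satisfies |β'| ≥ 1. -/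
noncomputable section

/-! If `β` is algebraic and `β'` is a conjugate of `β` with `|β'| < 1`, the embedding
`σ : ℚ(β) → ℂ`, `β ↦ β'`, maps every digit string `∑ aⱼ βʲ` over a finite alphabet
`A ⊆ ℤ[β] ⊆ ℚ(β)` to `∑ σ(aⱼ) β'ʲ`, whose modulus is at most `max |σ(A)| / (1 - |β'|)`.
Since `σ` fixes `ℕ`, the naturals would be bounded if all of them lay in `A[β]`. -/

open Finset IntermediateField

theorem norm_sum_mul_pow_le {𝕜 : Type*} [NormedDivisionRing 𝕜] {z : 𝕜} (hz : ‖z‖ < 1)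
    {a : ℕ → 𝕜} {M : ℝ} (ha : ∀ j, ‖a j‖ ≤ M) (n : ℕ) :
    ‖∑ j ∈ range n, a j * z ^ j‖ ≤ M * (1 - ‖z‖)⁻¹ := by
  have hM : 0 ≤ M := (norm_nonneg _).trans (ha 0)
  calc ‖∑ j ∈ range n, a j * z ^ j‖
      ≤ ∑ j ∈ range n, M * ‖z‖ ^ j := by
        refine (norm_sum_le _ _).trans (sum_le_sum fun j _ => ?_)
        rw [norm_mul, norm_pow]
        exact mul_le_mul_of_nonneg_right (ha j) (by positivity)
    _ = M * ∑ j ∈ Ico 0 n, ‖z‖ ^ j := by rw [← mul_sum, range_eq_Ico]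
    _ ≤ M * (1 - ‖z‖)⁻¹ := by
        gcongr
        simpa using geom_sum_Ico_le_of_lt_one (m := 0) (n := n) (norm_nonneg z) hz

theorem norm_map_le_of_mem_Apoly {R 𝕜 : Type*} [Ring R] [NormedDivisionRing 𝕜]
    (ι : R →+* ℂ) (hι : Function.Injective ι) (σ : R →+* 𝕜) {b : R} (hb : ‖σ b‖ < 1)
    {A : Set ℂ} (hA : A ⊆ Set.range ι) {M : ℝ} (hM : ∀ y, ι y ∈ A → ‖σ y‖ ≤ M)
    {x : R} (hx : ι x ∈ Apoly (ι b) A) : ‖σ x‖ ≤ M * (1 - ‖σ b‖)⁻¹ := by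
  obtain ⟨n, a, haA, hxa⟩ := hx
  choose d hd using fun j => hA (haA j)
  have hxd : x = ∑ j ∈ range (n + 1), d j * b ^ j :=
    hι (by simp [hxa, hd])
  rw [hxd, map_sum]
  simp only [map_mul, map_pow]
  exact norm_sum_mul_pow_le hb (fun j => hM _ ((hd j).symm ▸ haA j)) _

theorem Zring_le_adjoin_simple (β : ℂ) : Zring β ≤ ℚ⟮β⟯.toSubring :=
  Subring.closure_le.mpr (Set.singleton_subset_iff.mpr (mem_adjoin_simple_self ℚ β))

theorem exists_algHom_adjoin_simple_gen {β β' : ℂ} (hβ : IsAlgebraic ℚ β)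
    (hβ' : Polynomial.aeval β' (minpoly ℚ β) = 0) :
    ∃ σ : ℚ⟮β⟯ →ₐ[ℚ] ℂ, σ (AdjoinSimple.gen ℚ β) = β' :=
  ⟨(algHomAdjoinIntegralEquiv ℚ hβ.isIntegral).symm
      ⟨β', Polynomial.mem_aroots.mpr ⟨minpoly.ne_zero hβ.isIntegral, hβ'⟩⟩,
    algHomAdjoinIntegralEquiv_symm_apply_gen ℚ hβ.isIntegral _⟩

theorem stmt9_general (β : ℂ) (hβalg : IsAlgebraic ℚ β)
    (A : Set ℂ) (hAfin : A.Finite)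
    (hA : A ⊆ (Zring β : Set ℂ))
    (hN : ∀ n : ℕ, (n : ℂ) ∈ Apoly β A) :
    ∀ β' : ℂ, Polynomial.aeval β' (minpoly ℚ β) = 0 → 1 ≤ ‖β'‖ := by
  intro β' hβ'
  by_contra! hlt
  obtain ⟨σ, hσ⟩ := exists_algHom_adjoin_simple_gen hβalg hβ'
  let ι : ℚ⟮β⟯ →+* ℂ := (ℚ⟮β⟯).val
  have hι : Function.Injective ι := Subtype.val_injective
  have hAι : A ⊆ Set.range ι := fun x hx => ⟨⟨x, Zring_le_adjoin_simple β (hA hx)⟩, rfl⟩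
  obtain ⟨M, hM⟩ : BddAbove ((fun y => ‖σ y‖) '' (ι ⁻¹' A)) :=
    ((hAfin.preimage hι.injOn).image _).bddAbove
  have hbounded (n : ℕ) : (n : ℝ) ≤ M * (1 - ‖β'‖)⁻¹ := by
    have hn : ι n ∈ Apoly (ι (AdjoinSimple.gen ℚ β)) A := by
      rw [map_natCast]
      exact hN n
    simpa [hσ] using norm_map_le_of_mem_Apoly ι hι σ.toRingHom
      (by simpa [hσ] using hlt) hAι (fun y hy => hM ⟨y, hy, rfl⟩) hn
  obtain ⟨n, hn⟩ := exists_nat_gt (M * (1 - ‖β'‖)⁻¹)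
  exact (hbounded n).not_gt hn

theorem stmt9 (β : ℂ) (hβ : 1 < ‖β‖) (hβalg : IsAlgebraic ℚ β)
    (A : Set ℂ) (hAfin : A.Finite)
    (h0 : (0 : ℂ) ∈ A) (hA : A ⊆ (Zring β : Set ℂ))
    (hN : ∀ n : ℕ, (n : ℂ) ∈ Apoly β A) :
    ∀ β' : ℂ, Polynomial.aeval β' (minpoly ℚ β) = 0 → 1 ≤ ‖β'‖ :=
  stmt9_general β hβalg A hAfin hA hN
end
end

section
/- Let β be an algebraic number with |β| > 1 and degree at least 2, such that every algebraic conjugate of β has modulus ≥ 1. Then β has no conjugate of modulus exactly 1; consequently β is expanding, i.e., every conjugate of β has modulus strictly greater than 1. -/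
/-!
If some conjugate `γ` of `β` lies on the unit circle, then `γ⁻¹ = conj γ` is again a conjugate.
An irreducible polynomial vanishing at both `γ` and `γ⁻¹` divides its own reversal, so its roots
are closed under inversion; in particular `β⁻¹` is a conjugate of `β`, of modulus `< 1`.
-/

open Polynomial ComplexConjugate

theorem Polynomial.aeval_reverse_eq_zero_iff {R L : Type*} [CommSemiring R] [Field L]
    [Algebra R L] (p : R[X]) {x : L} (hx : x ≠ 0) :
    aeval x p.reverse = 0 ↔ aeval x⁻¹ p = 0 := by
  have : Invertible x⁻¹ := invertibleOfNonzero (inv_ne_zero hx)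
  simpa [aeval_def] using eval₂_reverse_eq_zero_iff (algebraMap R L) x⁻¹ p

theorem Irreducible.aeval_inv_eq_zero {K L : Type*} [Field K] [Field L] [Algebra K L]
    {p : K[X]} (hp : Irreducible p) {x y : L} (hx0 : x ≠ 0) (hx : aeval x p = 0)
    (hx_inv : aeval x⁻¹ p = 0) (hy0 : y ≠ 0) (hy : aeval y p = 0) : aeval y⁻¹ p = 0 := by
  have hdvd : p ∣ p.reverse :=
    (hp.dvd_iff_aeval_eq_zero hx).1 ((p.aeval_reverse_eq_zero_iff hx0).2 hx_inv)
  exact (p.aeval_reverse_eq_zero_iff hy0).1 (aeval_eq_zero_of_dvd_aeval_eq_zero hdvd hy)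

theorem Polynomial.aeval_conj_eq_zero {p : ℚ[X]} {z : ℂ} (hz : aeval z p = 0) :
    aeval (conj z) p = 0 := by
  simpa [hz] using aeval_algHom_apply (Complex.conjAe.toAlgHom.restrictScalars ℚ) z p

theorem stmt10_general (β : ℂ) (hβ : 1 < ‖β‖) (hβalg : IsAlgebraic ℚ β)
    (hconj : ∀ γ : ℂ, Polynomial.aeval γ (minpoly ℚ β) = 0 → 1 ≤ ‖γ‖) :
    ∀ γ : ℂ, Polynomial.aeval γ (minpoly ℚ β) = 0 → 1 < ‖γ‖ := by
  intro γ hγ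
  by_contra! hγ_le
  have hγ_norm : ‖γ‖ = 1 := le_antisymm hγ_le (hconj γ hγ)
  have hγ0 : γ ≠ 0 := norm_ne_zero_iff.1 (by simp [hγ_norm])
  have hγ_inv : aeval γ⁻¹ (minpoly ℚ β) = 0 := by
    rw [Complex.inv_eq_conj hγ_norm]
    exact aeval_conj_eq_zero hγ
  have hβ0 : β ≠ 0 := norm_pos_iff.1 (one_pos.trans hβ)
  have hβ_inv : aeval β⁻¹ (minpoly ℚ β) = 0 :=
    (minpoly.irreducible hβalg.isIntegral).aeval_inv_eq_zero hγ0 hγ hγ_inv hβ0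
      (minpoly.aeval ℚ β)
  have h_one_le := hconj β⁻¹ hβ_inv
  rw [norm_inv] at h_one_le
  exact (inv_lt_one_of_one_lt₀ hβ).not_ge h_one_le

theorem stmt10 (β : ℂ) (hβ : 1 < ‖β‖) (hβalg : IsAlgebraic ℚ β)
    (hdeg : 2 ≤ (minpoly ℚ β).natDegree)
    (hconj : ∀ γ : ℂ, Polynomial.aeval γ (minpoly ℚ β) = 0 → 1 ≤ ‖γ‖) :
    ∀ γ : ℂ, Polynomial.aeval γ (minpoly ℚ β) = 0 → 1 < ‖γ‖ :=
  stmt10_general β hβ hβalg hconj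
end

section
/- Let (β,A) be a numeration system with A ⊂ ℤ[β] and A[β] = ℤ[β] that allows parallel addition. Then for every x ∈ ℤ[β] there exists a ∈ A with x ≡ a (mod β in ℤ[β]), and there exists a' ∈ A with x ≡ a' (mod β−1 in ℤ[β]). In other words, A contains at least one representative of each congruence class modulo β and modulo β−1 in ℤ[β]. -/
noncomputable section

open Pointwise

/-- Congruence modulo `α` in `ℤ[β]`: `x ≡ y (mod α)` iff `x - y = α ε` for some `ε ∈ ℤ[β]`. -/
def CongMod (β α x y : ℂ) : Prop := ∃ ε ∈ Zring β, x - y = α * ε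

/-!
Congruence modulo `β - 1` only sees digit sums, since `β ^ k ≡ 1`. Feed a local rule `Φ` a block
of `n` copies of a digit `b`, with `n` longer than the window of `Φ`, and the block of `n + 1`
copies: the two outputs agree except that one output digit, `Φ (b, …, b)`, is repeated, so
comparing digit sums gives `b ≡ Φ (b, …, b) (mod β - 1)`. Hence `A` is closed under addition
modulo `β - 1`, and every `x = ∑ aⱼ βʲ ∈ ℤ[β]` is congruent to its digit sum and so to an element
of `A`. Modulo `β`, `x` is congruent to its digit `a₀` at position `0`.
-/

theorem CongMod.refl (β α x : ℂ) : CongMod β α x x :=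
  ⟨0, zero_mem _, by ring⟩

theorem CongMod.symm {β α x y : ℂ} (h : CongMod β α x y) : CongMod β α y x := by
  obtain ⟨ε, hε, h⟩ := h
  exact ⟨-ε, neg_mem hε, by linear_combination -h⟩

theorem CongMod.trans {β α x y z : ℂ} (hxy : CongMod β α x y) (hyz : CongMod β α y z) :
    CongMod β α x z := by
  obtain ⟨ε, hε, hxy⟩ := hxy
  obtain ⟨δ, hδ, hyz⟩ := hyz
  exact ⟨ε + δ, add_mem hε hδ, by linear_combination hxy + hyz⟩

theorem CongMod.add {β α x y x' y' : ℂ} (h : CongMod β α x y) (h' : CongMod β α x' y') :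
    CongMod β α (x + x') (y + y') := by
  obtain ⟨ε, hε, h⟩ := h
  obtain ⟨δ, hδ, h'⟩ := h'
  exact ⟨ε + δ, add_mem hε hδ, by linear_combination h + h'⟩

theorem CongMod.sub {β α x y x' y' : ℂ} (h : CongMod β α x y) (h' : CongMod β α x' y') :
    CongMod β α (x - x') (y - y') := by
  obtain ⟨ε, hε, h⟩ := h
  obtain ⟨δ, hδ, h'⟩ := h'
  exact ⟨ε - δ, sub_mem hε hδ, by linear_combination h - h'⟩

theorem CongMod.sum {β α : ℂ} {ι : Type*} (s : Finset ι) {f g : ι → ℂ}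
    (h : ∀ i ∈ s, CongMod β α (f i) (g i)) : CongMod β α (∑ i ∈ s, f i) (∑ i ∈ s, g i) := by
  classical
  induction s using Finset.induction_on with
  | empty => exact CongMod.refl _ _ _
  | insert a s ha ih =>
    rw [Finset.sum_insert ha, Finset.sum_insert ha]
    exact (h a (Finset.mem_insert_self a s)).add
      (ih fun i hi => h i (Finset.mem_insert_of_mem hi))

theorem self_mem_zring (β : ℂ) : β ∈ Zring β :=
  Subring.subset_closure rfl

theorem congMod_sub_one_mul_pow {β d : ℂ} (hd : d ∈ Zring β) (k : ℕ) :
    CongMod β (β - 1) (d * β ^ k) d :=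
  ⟨d * ∑ i ∈ Finset.range k, β ^ i,
    mul_mem hd (sum_mem fun i _ => pow_mem (self_mem_zring β) i),
    by linear_combination d * (geom_sum_mul β k).symm⟩

theorem congMod_sub_one_sum_mul_pow {β : ℂ} {d : ℕ → ℂ} (hd : ∀ k, d k ∈ Zring β) (n : ℕ) :
    CongMod β (β - 1) (∑ k ∈ Finset.range n, d k * β ^ k) (∑ k ∈ Finset.range n, d k) :=
  CongMod.sum _ fun k _ => congMod_sub_one_mul_pow (hd k) k

theorem congMod_self_sum_mul_pow {β : ℂ} {d : ℕ → ℂ} (hd : ∀ k, d k ∈ Zring β) (n : ℕ) :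
    CongMod β β (∑ k ∈ Finset.range (n + 1), d k * β ^ k) (d 0) := by
  refine ⟨∑ k ∈ Finset.range n, d (k + 1) * β ^ k,
    sum_mem fun k _ => mul_mem (hd _) (pow_mem (self_mem_zring β) k), ?_⟩
  rw [Finset.sum_range_succ', Finset.mul_sum]
  simp only [pow_zero, mul_one, add_sub_cancel_right]
  exact Finset.sum_congr rfl fun k _ => by ring

theorem exists_mem_congMod_sum {β α : ℂ} {A : Set ℂ} (h0 : (0 : ℂ) ∈ A)
    (hadd : ∀ b ∈ A + A, ∃ c ∈ A, CongMod β α b c) {a : ℕ → ℂ} (ha : ∀ j, a j ∈ A) (n : ℕ) :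
    ∃ c ∈ A, CongMod β α (∑ j ∈ Finset.range n, a j) c := by
  induction n with
  | zero => exact ⟨0, h0, CongMod.refl _ _ _⟩
  | succ n ih =>
    obtain ⟨c, hc, hsum⟩ := ih
    obtain ⟨c', hc', hcc'⟩ := hadd (c + a n) (Set.add_mem_add hc (ha n))
    rw [Finset.sum_range_succ]
    exact ⟨c', hc', (hsum.add (CongMod.refl _ _ _)).trans hcc'⟩

theorem finsum_eq_sum_range_of_support_subset {M : Type*} [AddCommMonoid M] {f : ℤ → M}
    {n : ℕ} (h : Function.support f ⊆ Set.Ico 0 n) :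
    ∑ᶠ j, f j = ∑ k ∈ Finset.range n, f k := by
  rw [finsum_eq_sum_of_support_subset f (s := (Finset.range n).map Nat.castEmbedding),
    Finset.sum_map]
  · rfl
  · intro j hj
    obtain ⟨hj0, hjn⟩ := h hj
    lift j to ℕ using hj0
    simpa using hjn

/-- `f` is `g` with its entry at `m` written twice. -/
theorem sum_range_succ_of_repeat {M : Type*} [AddCommMonoid M] {f g : ℕ → M} {m n : ℕ}
    (hmn : m ≤ n) (hle : ∀ k ≤ m, f k = g k) (hge : ∀ k ≥ m, f (k + 1) = g k) :
    ∑ k ∈ Finset.range (n + 1), f k = ∑ k ∈ Finset.range n, g k + g m := by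
  induction n, hmn using Nat.le_induction with
  | base =>
    rw [Finset.sum_range_succ, Finset.sum_congr rfl fun k hk => hle k (Finset.mem_range.1 hk).le,
      hle m le_rfl]
  | succ n hmn ih =>
    rw [Finset.sum_range_succ, ih, hge n hmn, Finset.sum_range_succ, add_right_comm]

def slidingImage (t : ℕ) {r : ℕ} (Φ : (Fin (r + t + 1) → ℂ) → ℂ) (w : ℤ → ℂ) : ℤ → ℂ :=
  fun j => Φ fun i => w (j + (t : ℤ) - ((i : ℕ) : ℤ))

/-- The block starts at position `t`, so that its image under a rule with anticipation `t`
starts at position `0`. -/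
def block (t n : ℕ) (b : ℂ) : ℤ → ℂ :=
  fun j => if (t : ℤ) ≤ j ∧ j < t + n then b else 0

section LocalRule

variable {β : ℂ} {B A : Set ℂ} {r t : ℕ} {Φ : (Fin (r + t + 1) → ℂ) → ℂ}

theorem IsLocalConv.map_zero (hΦ : IsLocalConv β B A r t Φ) (hB0 : (0 : ℂ) ∈ B) : Φ 0 = 0 := by
  by_contra hne
  have hfin := (hΦ.2 0 (fun _ => hB0) (by simp)).1
  simp only [Pi.zero_apply] at hfin
  exact Set.infinite_univ (Function.support_const hne ▸ hfin)

theorem slidingImage_block_eq_zero (hΦ0 : Φ 0 = 0) {n : ℕ} (b : ℂ) {j : ℤ}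
    (hj : j < 0 ∨ n + r + t ≤ j) : slidingImage t Φ (block t n b) j = 0 := by
  rw [slidingImage, ← hΦ0]
  congr 1
  funext i
  have := i.isLt
  simp only [block, Pi.zero_apply, ite_eq_right_iff]
  omega

theorem support_block_subset {n L : ℕ} (b : ℂ) (h : t + n ≤ L) :
    Function.support (block t n b) ⊆ Set.Ico 0 L := by
  intro j hj
  simp only [block, Function.mem_support, ne_eq, ite_eq_right_iff, Classical.not_imp] at hj
  simp only [Set.mem_Ico]
  omega

theorem support_slidingImage_block_subset (hΦ0 : Φ 0 = 0) {n L : ℕ} (b : ℂ)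
    (h : n + r + t ≤ L) : Function.support (slidingImage t Φ (block t n b)) ⊆ Set.Ico 0 L := by
  intro j hj
  simp only [Set.mem_Ico]
  by_contra hjL
  exact hj (slidingImage_block_eq_zero hΦ0 b (by omega))

theorem block_succ_of_lt {n : ℕ} (b : ℂ) {j : ℤ} (hj : j < t + n) :
    block t (n + 1) b j = block t n b j := by
  simp only [block]
  congr 1
  grind

theorem block_succ_succ {n : ℕ} (b : ℂ) {j : ℤ} (hj : t ≤ j) :
    block t (n + 1) b (j + 1) = block t n b j := by
  simp only [block]
  congr 1
  grind

theorem slidingImage_block_succ_of_le {n : ℕ} (b : ℂ) (hn : r + t < n) {j : ℤ}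
    (hj : j ≤ r + t) :
    slidingImage t Φ (block t (n + 1) b) j = slidingImage t Φ (block t n b) j := by
  simp only [slidingImage]
  congr 1
  funext i
  have := i.isLt
  exact block_succ_of_lt b (by omega)

theorem slidingImage_block_succ_succ {n : ℕ} (b : ℂ) {j : ℤ} (hj : r + t ≤ j) :
    slidingImage t Φ (block t (n + 1) b) (j + 1) = slidingImage t Φ (block t n b) j := by
  simp only [slidingImage]
  congr 1
  funext i
  have := i.isLt
  rw [show j + 1 + t - i = j + t - i + 1 by ring]
  exact block_succ_succ b (by omega)

theorem slidingImage_block_self {n : ℕ} (b : ℂ) (hn : r + t < n) :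
    slidingImage t Φ (block t n b) (r + t) = Φ fun _ => b := by
  simp only [slidingImage]
  congr 1
  funext i
  have := i.isLt
  simp only [block]
  rw [if_pos (by omega)]

theorem IsLocalConv.congMod_sum_of_support_subset (hΦ : IsLocalConv β B A r t Φ)
    (hB : B ⊆ Zring β) (hA : A ⊆ Zring β) {w : ℤ → ℂ} (hw : ∀ j, w j ∈ B) {L : ℕ}
    (hwL : Function.support w ⊆ Set.Ico 0 L)
    (hzL : Function.support (slidingImage t Φ w) ⊆ Set.Ico 0 L) :
    CongMod β (β - 1) (∑ k ∈ Finset.range L, w k)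
      (∑ k ∈ Finset.range L, slidingImage t Φ w k) := by
  have hval : ∑ᶠ j, w j * β ^ j = ∑ᶠ j, slidingImage t Φ w j * β ^ j :=
    (hΦ.2 w hw ((Set.finite_Ico (0 : ℤ) L).subset hwL)).2
  rw [finsum_eq_sum_range_of_support_subset ((Function.support_mul_subset_left _ _).trans hwL),
    finsum_eq_sum_range_of_support_subset
      ((Function.support_mul_subset_left _ _).trans hzL)] at hval
  simp only [zpow_natCast] at hval
  have hz : ∀ k : ℕ, slidingImage t Φ w k ∈ Zring β := fun k => hA (hΦ.1 _ fun _ => hw _)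
  exact (congMod_sub_one_sum_mul_pow (fun k => hB (hw k)) L).symm.trans
    (hval ▸ congMod_sub_one_sum_mul_pow hz L)

theorem IsLocalConv.congMod_apply_const (hΦ : IsLocalConv β B A r t Φ) (hB : B ⊆ Zring β)
    (hA : A ⊆ Zring β) (hB0 : (0 : ℂ) ∈ B) {b : ℂ} (hb : b ∈ B) :
    CongMod β (β - 1) b (Φ fun _ => b) := by
  have hΦ0 := hΦ.map_zero hB0
  have hblock : ∀ n j, block t n b j ∈ B := fun n j => by
    unfold block
    split_ifs
    exacts [hb, hB0]
  obtain ⟨L, hL⟩ : ∃ L, L = 2 * (r + t) + 1 := ⟨_, rfl⟩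
  have hshort := hΦ.congMod_sum_of_support_subset hB hA (hblock (r + t + 1))
    (support_block_subset b (L := L) (by omega))
    (support_slidingImage_block_subset hΦ0 b (by omega))
  have hlong := hΦ.congMod_sum_of_support_subset hB hA (hblock (r + t + 2))
    (support_block_subset b (L := L + 1) (by omega))
    (support_slidingImage_block_subset hΦ0 b (L := L + 1) (by omega))
  have hw : ∑ k ∈ Finset.range (L + 1), block t (r + t + 2) b k =
      ∑ k ∈ Finset.range L, block t (r + t + 1) b k + b := by
    rw [sum_range_succ_of_repeat (m := t) (by omega)
      (fun k hk => block_succ_of_lt b (by omega))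
      (fun k hk => by push_cast; exact block_succ_succ b (by omega))]
    simp only [block]
    rw [if_pos (by omega)]
  have hz : ∑ k ∈ Finset.range (L + 1), slidingImage t Φ (block t (r + t + 2) b) k =
      ∑ k ∈ Finset.range L, slidingImage t Φ (block t (r + t + 1) b) k + Φ fun _ => b := by
    rw [sum_range_succ_of_repeat (m := r + t) (by omega)
      (fun k hk => slidingImage_block_succ_of_le b (by omega) (by omega))
      (fun k hk => by push_cast; exact slidingImage_block_succ_succ b (by omega))]
    push_cast
    rw [slidingImage_block_self b (by omega)]
  rw [hw, hz] at hlong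
  simpa using hlong.sub hshort

end LocalRule

theorem stmt12_general (β : ℂ) (A : Set ℂ)
    (h0 : (0 : ℂ) ∈ A) (hA : A ⊆ (Zring β : Set ℂ))
    (hfull : Apoly β A = (Zring β : Set ℂ))
    (hpar : AllowsParAdd β A) :
    ∀ x ∈ Zring β, (∃ a ∈ A, CongMod β β x a) ∧ ∃ a' ∈ A, CongMod β (β - 1) x a' := by
  intro x hx
  obtain ⟨n, a, ha, rfl⟩ : x ∈ Apoly β A := hfull ▸ hx
  have haZ : ∀ j, a j ∈ Zring β := fun j => hA (ha j)
  refine ⟨⟨a 0, ha 0, congMod_self_sum_mul_pow haZ n⟩, ?_⟩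
  obtain ⟨r, t, Φ, hΦ⟩ := hpar
  have hAA : A + A ⊆ Zring β := by
    rintro _ ⟨c, hc, d, hd, rfl⟩
    exact add_mem (hA hc) (hA hd)
  have hadd : ∀ b ∈ A + A, ∃ c ∈ A, CongMod β (β - 1) b c := fun b hb =>
    ⟨Φ fun _ => b, hΦ.1 _ fun _ => hb,
      hΦ.congMod_apply_const hAA hA (by simpa using Set.add_mem_add h0 h0) hb⟩
  obtain ⟨c, hc, hsum⟩ := exists_mem_congMod_sum h0 hadd ha (n + 1)
  exact ⟨c, hc, (congMod_sub_one_sum_mul_pow haZ (n + 1)).trans hsum⟩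

theorem stmt12 (β : ℂ) (hβ : 1 < ‖β‖) (A : Set ℂ) (hAfin : A.Finite)
    (h0 : (0 : ℂ) ∈ A) (hA : A ⊆ (Zring β : Set ℂ))
    (hfull : Apoly β A = (Zring β : Set ℂ))
    (hpar : AllowsParAdd β A) :
    ∀ x ∈ Zring β, (∃ a ∈ A, CongMod β β x a) ∧ ∃ a' ∈ A, CongMod β (β - 1) x a' :=
  stmt12_general β A h0 hA hfull hpar
end
end

section
/- Let β be an algebraic number with |β| > 1 that has a conjugate γ with |γ| = 1, and let A ⊂ ℤ[β] be a finite alphabet with 0 ∈ A and 1 ∈ Fin_β(A). Then for no k ∈ ℕ does (β,A) allow k-block parallel addition; i.e., there is no p-local value-preserving digit-set conversion in base β^k from A_(k) + A_(k) to A_(k), where A_(k) = { Σ_{i=0}^{k−1} a_i β^i : a_i ∈ A }. -/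
noncomputable section

open Pointwise

/-- The `k`-block alphabet `A_(k) = { ∑_{i=0}^{k-1} a_i β^i : a_i ∈ A }`. -/
def BlockAlphabet (β : ℂ) (A : Set ℂ) (k : ℕ) : Set ℂ :=
  {x | ∃ a : ℕ → ℂ, (∀ i, a i ∈ A) ∧ x = ∑ i ∈ Finset.range k, a i * β ^ i}

/-! Let `σ : ℚ(β) → ℂ` be the embedding with `σ β = γ`. As `|σ β| = 1`, `σ` maps `A_(k)` into a
bounded disc and preserves the modulus of every power of `β ^ k`. A `p`-local parallel addition
turns a representation of `x`, doubled digitwise, into a representation of `2 x` that is only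
`p` digits longer. Starting from a nonzero digit `a`, the number `2 ^ s a` then has a
representation with `O(s)` digits, so `|σ (2 ^ s a)| = 2 ^ s |σ a|` grows at most linearly in `s`,
which is absurd. -/

open Filter Topology in
theorem exists_add_mul_lt_two_pow_mul (a b : ℝ) {c : ℝ} (hc : 0 < c) :
    ∃ s : ℕ, a + b * s < 2 ^ s * c := by
  have hlim : Tendsto (fun s : ℕ => a * ((s : ℝ) ^ 0 / 2 ^ s) + b * ((s : ℝ) ^ 1 / 2 ^ s))
      atTop (𝓝 0) := by
    simpa using ((tendsto_pow_const_div_const_pow_of_one_lt 0 one_lt_two).const_mul a).add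
      ((tendsto_pow_const_div_const_pow_of_one_lt 1 one_lt_two).const_mul b)
  obtain ⟨s, hs⟩ := (hlim.eventually (gt_mem_nhds hc)).exists
  refine ⟨s, ?_⟩
  rw [← div_lt_iff₀' (by positivity)]
  convert hs using 1
  ring

namespace IsLocalConv

variable {β : ℂ} {B A : Set ℂ} {r t : ℕ} {Φ : (Fin (r + t + 1) → ℂ) → ℂ}

theorem apply_zero (hΦ : IsLocalConv β B A r t Φ) (hB : (0 : ℂ) ∈ B) :
    Φ (fun _ => 0) = 0 := by
  by_contra hne
  have hfin := (hΦ.2 (fun _ => 0) (fun _ => hB) (by simp)).1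
  rw [Function.support_const hne] at hfin
  exact Set.infinite_univ hfin

/-- Output digit `j` is read off the input digits at positions `j - r, …, j + t`. -/
theorem exists_rep_of_support_subset (hΦ : IsLocalConv β B A r t Φ) (hB : (0 : ℂ) ∈ B) {w : ℤ → ℂ}
    (hw : ∀ j, w j ∈ B) {m n : ℤ} (hsupp : Function.support w ⊆ Set.Icc m n) :
    ∃ v : ℤ → ℂ, (∀ j, v j ∈ A) ∧ Function.support v ⊆ Set.Icc (m - t) (n + r) ∧
      ∑ᶠ j, v j * β ^ j = ∑ᶠ j, w j * β ^ j := by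
  refine ⟨fun j => Φ fun i => w (j + t - i), fun j => hΦ.1 _ fun i => hw _, ?_,
    ((hΦ.2 w hw ((Set.finite_Icc m n).subset hsupp)).2).symm⟩
  intro j hj
  by_contra hout
  refine hj ?_
  have hwin : (fun i : Fin (r + t + 1) => w (j + t - i)) = fun _ => 0 := by
    funext i
    refine Function.notMem_support.1 fun hi => hout ?_
    have := hsupp hi
    have := i.isLt
    simp only [Set.mem_Icc] at *
    omega
  simp only [hwin, hΦ.apply_zero hB]

theorem exists_rep_two_pow_mul (hΦ : IsLocalConv β (B + B) B r t Φ) (hB : (0 : ℂ) ∈ B)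
    {a : ℂ} (ha : a ∈ B) (s : ℕ) :
    ∃ w : ℤ → ℂ, (∀ j, w j ∈ B) ∧
      Function.support w ⊆ Set.Icc (-((s * t : ℕ) : ℤ)) ((s * r : ℕ) : ℤ) ∧
      ∑ᶠ j, w j * β ^ j = 2 ^ s * a := by
  induction s with
  | zero =>
    refine ⟨Pi.single 0 a, fun j => ?_, Pi.support_single_subset.trans (by simp), ?_⟩
    · rcases eq_or_ne j 0 with rfl | hj
      · simpa using ha
      · simpa [hj] using hB
    · rw [finsum_eq_single _ 0 fun j hj => by simp [hj]]
      simp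
  | succ s ih =>
    obtain ⟨w, hw, hsupp, hval⟩ := ih
    have hsupp_double : Function.support (fun j => w j + w j) ⊆
        Set.Icc (-((s * t : ℕ) : ℤ)) ((s * r : ℕ) : ℤ) :=
      fun j hj => hsupp fun h => hj (by simp [h])
    obtain ⟨v, hv, hvsupp, hvval⟩ := hΦ.exists_rep_of_support_subset
      (by simpa using Set.add_mem_add hB hB) (fun j => Set.add_mem_add (hw j) (hw j)) hsupp_double
    refine ⟨v, hv, hvsupp.trans (Set.Icc_subset_Icc (by push_cast; lia) (by push_cast; lia)), ?_⟩
    rw [hvval, pow_succ', mul_assoc, ← hval, mul_finsum]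
    exact finsum_congr fun j => by ring

end IsLocalConv

theorem FinRep.exists_mem_ne_zero {β x : ℂ} {A : Set ℂ} (h : FinRep β A x) (hx : x ≠ 0) :
    ∃ a ∈ A, a ≠ 0 := by
  obtain ⟨m, n, a, ha, rfl⟩ := h
  obtain ⟨j, -, hj⟩ := Finset.exists_ne_zero_of_sum_ne_zero hx
  exact ⟨a j, ha j, left_ne_zero_of_mul hj⟩

theorem mem_blockAlphabet_of_mem {β a : ℂ} {A : Set ℂ} {k : ℕ} (h0 : (0 : ℂ) ∈ A) (ha : a ∈ A)
    (hk : 0 < k) : a ∈ BlockAlphabet β A k := by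
  refine ⟨Pi.single 0 a, fun i => ?_, ?_⟩
  · rcases eq_or_ne i 0 with rfl | hi
    · simpa using ha
    · simpa [hi] using h0
  · rw [Finset.sum_eq_single_of_mem 0 (Finset.mem_range.2 hk) fun i _ hi => by simp [hi]]
    simp

namespace IntermediateField

theorem exists_algHom_adjoin_simple_apply_gen {F E L : Type*} [Field F]
    [Field E] [Field L] [Algebra F E] [Algebra F L] {α : E} (hα : IsIntegral F α) {γ : L}
    (hγ : Polynomial.aeval γ (minpoly F α) = 0) :
    ∃ σ : F⟮α⟯ →ₐ[F] L, σ (AdjoinSimple.gen F α) = γ :=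
  ⟨_, algHomAdjoinIntegralEquiv_symm_apply_gen F hα
    ⟨γ, Polynomial.mem_aroots.2 ⟨minpoly.ne_zero hα, hγ⟩⟩⟩

end IntermediateField

section Conjugate

variable {S : Type*} [SetLike S ℂ] [SubfieldClass S ℂ] {K : S} (σ : K →+* ℂ)

theorem blockAlphabet_subset (β : K) {A : Set ℂ} (hA : A ⊆ K) (k : ℕ) :
    BlockAlphabet β A k ⊆ K := by
  rintro x ⟨a, ha, rfl⟩
  exact sum_mem fun i _ => mul_mem (hA (ha i)) (pow_mem β.2 i)

theorem norm_map_le_of_sum_mul_zpow_eq {δ : K} (hδ : ‖σ δ‖ = 1) {ι : Type*} (s : Finset ι)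
    (e : ι → ℤ) {w : ι → ℂ} (hw : ∀ i, w i ∈ K) {C : ℝ} (hC : ∀ i ∈ s, ‖σ ⟨w i, hw i⟩‖ ≤ C)
    {x : K} (hx : ∑ i ∈ s, w i * (δ : ℂ) ^ e i = x) :
    ‖σ x‖ ≤ s.card * C := by
  have hlift : x = ∑ i ∈ s, ⟨w i, hw i⟩ * δ ^ e i := by
    have hcoe (n : ℤ) : ((δ ^ n : K) : ℂ) = δ ^ n := map_zpow₀ (SubringClass.subtype K) δ n
    ext
    simp [← hx, hcoe]
  rw [hlift, map_sum]
  refine (norm_sum_le_of_le s (n := fun _ => C) fun i hi => ?_).trans_eq (by simp)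
  simpa [hδ] using hC i hi

variable {σ}

theorem norm_map_le_of_mem_blockAlphabet {β : K} (hβ : ‖σ β‖ = 1) {A : Set ℂ} (hA : A ⊆ K)
    {C : ℝ} (hC : ∀ y : K, (y : ℂ) ∈ A → ‖σ y‖ ≤ C) {k : ℕ} {y : K}
    (hy : (y : ℂ) ∈ BlockAlphabet β A k) : ‖σ y‖ ≤ k * C := by
  obtain ⟨a, ha, hya⟩ := hy
  simpa using norm_map_le_of_sum_mul_zpow_eq σ hβ (Finset.range k) Nat.cast (fun i => hA (ha i))
    (fun i _ => hC _ (ha i)) (by simp [hya])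

theorem norm_map_le_of_finsum_mul_zpow_eq {δ : K} (hδ : ‖σ δ‖ = 1) {B : Set ℂ} (hB : B ⊆ K)
    {C : ℝ} (hC : ∀ y : K, (y : ℂ) ∈ B → ‖σ y‖ ≤ C) {w : ℤ → ℂ} (hw : ∀ j, w j ∈ B) {m n : ℕ}
    (hsupp : Function.support w ⊆ Set.Icc (-(m : ℤ)) n) {x : K}
    (hx : ∑ᶠ j, w j * (δ : ℂ) ^ j = x) :
    ‖σ x‖ ≤ (n + m + 1) * C := by
  rw [finsum_eq_sum_of_support_subset (s := Finset.Icc (-(m : ℤ)) n)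
    _ fun j hj => by simpa using hsupp (left_ne_zero_of_mul hj)] at hx
  have hcard : (Finset.Icc (-(m : ℤ)) n).card = n + m + 1 := by
    rw [Int.card_Icc]
    omega
  simpa [hcard] using norm_map_le_of_sum_mul_zpow_eq σ hδ _ id (fun j => hB (hw j))
    (fun j _ => hC _ (hw j)) hx

end Conjugate

open IntermediateField in
theorem stmt19_general (β γ : ℂ) (hβalg : IsAlgebraic ℚ β)
    (hγ : Polynomial.aeval γ (minpoly ℚ β) = 0) (hγmod : ‖γ‖ = 1)
    (A : Set ℂ) (hAfin : A.Finite) (h0 : (0 : ℂ) ∈ A) (hA : A ⊆ (Zring β : Set ℂ))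
    (h1 : FinRep β A 1) :
    ∀ k : ℕ, 0 < k → ¬ AllowsParAdd (β ^ k) (BlockAlphabet β A k) := by
  rintro k hk ⟨r, t, Φ, hΦ⟩
  obtain ⟨σ, hσ⟩ := exists_algHom_adjoin_simple_apply_gen hβalg.isIntegral hγ
  set β' := AdjoinSimple.gen ℚ β
  have hAK : A ⊆ ℚ⟮β⟯ :=
    hA.trans (Subring.closure_le.2 (Set.singleton_subset_iff.2 β'.2) : Zring β ≤ ℚ⟮β⟯.toSubring)
  obtain ⟨C, hC⟩ := ((hAfin.preimage Subtype.val_injective.injOn).image fun y => ‖σ y‖).bddAbove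
  have hσβ : ‖σ β'‖ = 1 := hσ ▸ hγmod
  have hBC : ∀ y : ℚ⟮β⟯, (y : ℂ) ∈ BlockAlphabet β A k → ‖(σ : ℚ⟮β⟯ →+* ℂ) y‖ ≤ k * C :=
    fun y => norm_map_le_of_mem_blockAlphabet hσβ hAK fun y hy => hC ⟨y, hy, rfl⟩
  obtain ⟨a, haA, ha0⟩ := h1.exists_mem_ne_zero one_ne_zero
  set a' : ℚ⟮β⟯ := ⟨a, hAK haA⟩
  have hε : 0 < ‖σ a'‖ := norm_pos_iff.2 ((map_ne_zero σ).2 (Subtype.coe_ne_coe.1 ha0))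
  obtain ⟨s, hs⟩ := exists_add_mul_lt_two_pow_mul (k * C) ((r + t) * (k * C)) hε
  obtain ⟨w, hw, hsupp, hval⟩ := hΦ.exists_rep_two_pow_mul
    (mem_blockAlphabet_of_mem h0 h0 hk) (mem_blockAlphabet_of_mem h0 haA hk) s
  have hbound := norm_map_le_of_finsum_mul_zpow_eq (δ := β' ^ k) (x := 2 ^ s * a')
    (by simp [hσβ]) (blockAlphabet_subset β' hAK k) hBC hw hsupp (by push_cast; exact hval)
  simp only [RingHom.coe_coe, map_mul, map_pow, map_ofNat, norm_mul, norm_pow,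
    Complex.norm_two, Nat.cast_mul] at hbound
  linarith

theorem stmt19 (β γ : ℂ) (hβ : 1 < ‖β‖) (hβalg : IsAlgebraic ℚ β)
    (hγ : Polynomial.aeval γ (minpoly ℚ β) = 0) (hγmod : ‖γ‖ = 1)
    (A : Set ℂ) (hAfin : A.Finite) (h0 : (0 : ℂ) ∈ A) (hA : A ⊆ (Zring β : Set ℂ))
    (h1 : FinRep β A 1) :
    ∀ k : ℕ, 0 < k → ¬ AllowsParAdd (β ^ k) (BlockAlphabet β A k) :=
  stmt19_general β γ hβalg hγ hγmod A hAfin h0 hA h1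
end
end
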